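/- arXiv:1706.04646 — 3 statements merged into one kernel-verified Lean document; each statement's English description precedes it below -/
import Mathlib

section
/- Let f map datasets (finite multisets of elements of a finite set) to real vectors. If algorithm A releases f(X) plus independent Laplace(Δ_f/ε) noise in each coordinate, where Δ_f is the sensitivity of f (the maximum over neighboring datasets X, X' of the L1 distance ‖f(X) − f(X')‖₁), then A satisfies ε-differential privacy: for any neighboring datasets X, X' and any measurable set S, Pr[A(X) ∈ S] ≤ exp(ε)·Pr[A(X') ∈ S]. -/
open MeasureTheory Real

/-- Neighboring datasets: one is obtained from the other by adding one record. -/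
def Neighbor {R : Type*} (X X' : Multiset R) : Prop :=
  (∃ r, X' = r ::ₘ X) ∨ (∃ r, X = r ::ₘ X')

/-- The Laplace mechanism: release `f X` plus i.i.d. Laplace(b) noise in each
coordinate, as a measure on `Fin d → ℝ` with the product Laplace density
centered at `f X`. -/
noncomputable def laplaceMechanism {R : Type*} {d : ℕ}
    (f : Multiset R → (Fin d → ℝ)) (b : ℝ) (X : Multiset R) :
    Measure (Fin d → ℝ) :=
  (volume : Measure (Fin d → ℝ)).withDensity
    (fun z => ENNReal.ofReal (∏ i, (1 / (2 * b)) * exp (-|z i - f X i| / b)))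

/-- The Laplace mechanism with noise scale `Δ/ε`, where `Δ` is the (global)
sensitivity of `f`, satisfies `ε`-differential privacy. -/
theorem laplace_mechanism_dp {R : Type*} [Finite R] {d : ℕ}
    (f : Multiset R → (Fin d → ℝ)) (ε Δ : ℝ) (hε : 0 < ε) (hΔ : 0 < Δ)
    (hsens : IsGreatest {s : ℝ | ∃ X X', Neighbor X X' ∧
      s = ∑ i, |f X i - f X' i|} Δ)
    (X X' : Multiset R) (hnbr : Neighbor X X')
    (S : Set (Fin d → ℝ)) (hS : MeasurableSet S) :
    laplaceMechanism f (Δ / ε) X S ≤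
      ENNReal.ofReal (exp ε) * laplaceMechanism f (Δ / ε) X' S := by
  set b : ℝ := Δ / ε with hb_def
  have hb : 0 < b := div_pos hΔ hε
  -- pointwise density bound
  have key : ∀ z : Fin d → ℝ,
      (∏ i, (1 / (2 * b)) * exp (-|z i - f X i| / b)) ≤
        exp ε * ∏ i, (1 / (2 * b)) * exp (-|z i - f X' i| / b) := by
    intro z
    rw [Finset.prod_mul_distrib, Finset.prod_mul_distrib, ← Real.exp_sum,
      ← Real.exp_sum]
    have hc : (0:ℝ) ≤ ∏ _i : Fin d, (1 / (2 * b)) := by positivity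
    rw [show exp ε * ((∏ _i : Fin d, (1 / (2 * b))) *
        exp (∑ i, -|z i - f X' i| / b)) =
        (∏ _i : Fin d, (1 / (2 * b))) *
        (exp ε * exp (∑ i, -|z i - f X' i| / b)) by ring]
    apply mul_le_mul_of_nonneg_left _ hc
    rw [← Real.exp_add]
    apply Real.exp_le_exp.mpr
    have hsum : ∑ i, |f X i - f X' i| ≤ Δ := hsens.2 ⟨X, X', hnbr, rfl⟩
    have h1 : ∀ i, |z i - f X' i| - |z i - f X i| ≤ |f X i - f X' i| := by
      intro i
      have := abs_sub_abs_le_abs_sub (z i - f X' i) (z i - f X i)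
      calc |z i - f X' i| - |z i - f X i| ≤ |(z i - f X' i) - (z i - f X i)| :=
            this
        _ = |f X i - f X' i| := by ring_nf
    have h2 : ∑ i, (|z i - f X' i| - |z i - f X i|) ≤ Δ :=
      le_trans (Finset.sum_le_sum fun i _ => h1 i) hsum
    have hεΔ : Δ / b = ε := by
      rw [hb_def]; field_simp
    have : (∑ i, (|z i - f X' i| - |z i - f X i|)) / b ≤ ε := by
      rw [← hεΔ]
      exact div_le_div_of_nonneg_right h2 hb.le
    calc ∑ i, -|z i - f X i| / b
        = (∑ i, (|z i - f X' i| - |z i - f X i|)) / b +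
          ∑ i, -|z i - f X' i| / b := by
          rw [Finset.sum_div, ← Finset.sum_add_distrib]
          congr 1; ext i; ring
      _ ≤ ε + ∑ i, -|z i - f X' i| / b := by linarith
  -- now lift to measures
  rw [laplaceMechanism, laplaceMechanism, withDensity_apply _ hS,
    withDensity_apply _ hS, ← lintegral_const_mul' _ _ ENNReal.ofReal_ne_top]
  apply lintegral_mono
  intro z
  dsimp only
  rw [← ENNReal.ofReal_mul (exp_pos ε).le]
  exact ENNReal.ofReal_le_ofReal (key z)
end

section
/- Let μ̂ be a vector of clique marginal probabilities of some strictly positive distribution q on the finite space 𝒳^T. Then the supremum over θ ∈ ℝ^d of the normalized log-likelihood θᵀμ̂ − A(θ) is finite, and it is attained at θ* if and only if the model marginals E_{θ*}[φ(x)] equal μ̂. -/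
/-!
The objective `θ ↦ θ ⬝ᵥ μ̂ - A θ` is bounded above by `0`, since each `θ ⬝ᵥ φ x` is at most
`A θ` and `μ̂` is an average of the `φ x`.  The log-partition function `A` is convex with
directional derivative `v ⬝ᵥ m θ`, where `m θ` is the mean of `φ` under the Gibbs distribution
of `θ`; Jensen's inequality under that distribution gives the supporting hyperplane
`A θ' - A θ ≥ (θ' - θ) ⬝ᵥ m θ`.  Hence `m θ = μ̂` makes `θ` a maximiser, and conversely at a
maximiser the derivative in the direction `v = μ̂ - m θ` vanishes, i.e. `v ⬝ᵥ v = 0`.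
-/

open Real Matrix

theorem Real.sum_mul_le_log_sum_mul_exp {α : Type*} [Fintype α] (w g : α → ℝ)
    (hw : ∀ x, 0 ≤ w x) (hw1 : ∑ x, w x = 1) :
    ∑ x, w x * g x ≤ log (∑ x, w x * exp (g x)) := by
  have jensen := convexOn_exp.map_sum_le (t := Finset.univ) (w := w) (p := g)
    (fun x _ => hw x) hw1 (fun x _ => Set.mem_univ _)
  simp only [smul_eq_mul] at jensen
  rwa [le_log_iff_exp_le (lt_of_lt_of_le (exp_pos _) jensen)]

namespace ExpFamily

variable {α ι : Type*} [Fintype α] [Fintype ι]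

noncomputable def logPartition (φ : α → ι → ℝ) (θ : ι → ℝ) : ℝ :=
  log (∑ x, exp (θ ⬝ᵥ φ x))

noncomputable def gibbs (φ : α → ι → ℝ) (θ : ι → ℝ) (x : α) : ℝ :=
  exp (θ ⬝ᵥ φ x - logPartition φ θ)

noncomputable def meanParam (φ : α → ι → ℝ) (θ : ι → ℝ) : ι → ℝ :=
  ∑ x, gibbs φ θ x • φ x

noncomputable def logLik (φ : α → ι → ℝ) (μ θ : ι → ℝ) : ℝ :=
  θ ⬝ᵥ μ - logPartition φ θ

theorem dotProduct_sum_smul (v : ι → ℝ) (c : α → ℝ) (φ : α → ι → ℝ) :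
    v ⬝ᵥ ∑ x, c x • φ x = ∑ x, c x * (v ⬝ᵥ φ x) := by
  simp only [dotProduct_sum, dotProduct_smul, smul_eq_mul]

theorem dotProduct_le_logPartition (φ : α → ι → ℝ) (θ : ι → ℝ) (x : α) :
    θ ⬝ᵥ φ x ≤ logPartition φ θ := by
  have hle : exp (θ ⬝ᵥ φ x) ≤ ∑ y, exp (θ ⬝ᵥ φ y) :=
    Finset.single_le_sum (f := fun y => exp (θ ⬝ᵥ φ y)) (fun y _ => (exp_pos _).le)
      (Finset.mem_univ x)
  exact (le_log_iff_exp_le (lt_of_lt_of_le (exp_pos _) hle)).2 hle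

theorem logLik_le_zero (φ : α → ι → ℝ) (q : α → ℝ) (hq : ∀ x, 0 ≤ q x)
    (hq1 : ∑ x, q x = 1) (θ : ι → ℝ) :
    logLik φ (∑ x, q x • φ x) θ ≤ 0 := by
  have hmean : θ ⬝ᵥ ∑ x, q x • φ x ≤ logPartition φ θ :=
    calc θ ⬝ᵥ ∑ x, q x • φ x = ∑ x, q x * (θ ⬝ᵥ φ x) := dotProduct_sum_smul θ q φ
      _ ≤ ∑ x, q x * logPartition φ θ := Finset.sum_le_sum fun x _ =>
          mul_le_mul_of_nonneg_left (dotProduct_le_logPartition φ θ x) (hq x)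
      _ = logPartition φ θ := by rw [← Finset.sum_mul, hq1, one_mul]
  exact sub_nonpos.2 hmean

variable [Nonempty α]

theorem sum_exp_pos (φ : α → ι → ℝ) (θ : ι → ℝ) : 0 < ∑ x, exp (θ ⬝ᵥ φ x) :=
  Finset.sum_pos (fun _ _ => exp_pos _) Finset.univ_nonempty

theorem gibbs_eq (φ : α → ι → ℝ) (θ : ι → ℝ) (x : α) :
    gibbs φ θ x = exp (θ ⬝ᵥ φ x) / ∑ y, exp (θ ⬝ᵥ φ y) := by
  rw [gibbs, logPartition, exp_sub, exp_log (sum_exp_pos φ θ)]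

theorem sum_gibbs (φ : α → ι → ℝ) (θ : ι → ℝ) : ∑ x, gibbs φ θ x = 1 := by
  simp only [gibbs_eq, ← Finset.sum_div, div_self (sum_exp_pos φ θ).ne']

theorem logPartition_sub_logPartition (φ : α → ι → ℝ) (θ θ' : ι → ℝ) :
    logPartition φ θ' - logPartition φ θ
      = log (∑ x, gibbs φ θ x * exp ((θ' - θ) ⬝ᵥ φ x)) := by
  have hterm : ∀ x, gibbs φ θ x * exp ((θ' - θ) ⬝ᵥ φ x)
      = exp (θ' ⬝ᵥ φ x) / ∑ y, exp (θ ⬝ᵥ φ y) := fun x => by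
    rw [gibbs_eq, sub_dotProduct, div_mul_eq_mul_div, ← exp_add, add_sub_cancel]
  rw [Finset.sum_congr rfl fun x _ => hterm x, ← Finset.sum_div,
    log_div (sum_exp_pos φ θ').ne' (sum_exp_pos φ θ).ne', logPartition, logPartition]

theorem dotProduct_meanParam_le (φ : α → ι → ℝ) (θ θ' : ι → ℝ) :
    (θ' - θ) ⬝ᵥ meanParam φ θ ≤ logPartition φ θ' - logPartition φ θ := by
  rw [meanParam, dotProduct_sum_smul, logPartition_sub_logPartition]
  exact Real.sum_mul_le_log_sum_mul_exp _ _ (fun x => (exp_pos _).le) (sum_gibbs φ θ)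

theorem hasDerivAt_logPartition_line (φ : α → ι → ℝ) (θ v : ι → ℝ) :
    HasDerivAt (fun t : ℝ => logPartition φ (θ + t • v)) (v ⬝ᵥ meanParam φ θ) 0 := by
  have hline : ∀ x, HasDerivAt (fun t : ℝ => exp ((θ + t • v) ⬝ᵥ φ x))
      (exp (θ ⬝ᵥ φ x) * (v ⬝ᵥ φ x)) 0 := fun x => by
    simp only [add_dotProduct, smul_dotProduct, smul_eq_mul]
    simpa using (((hasDerivAt_id (0 : ℝ)).mul_const (v ⬝ᵥ φ x)).const_add (θ ⬝ᵥ φ x)).exp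
  have hsum := (HasDerivAt.fun_sum fun x (_ : x ∈ Finset.univ) => hline x).log
    (by simpa using (sum_exp_pos φ θ).ne')
  refine hsum.congr_deriv ?_
  simp only [zero_smul, add_zero, meanParam, dotProduct_sum_smul, gibbs_eq, Finset.sum_div]
  exact Finset.sum_congr rfl fun x _ => by ring

theorem meanParam_eq_of_isMax {φ : α → ι → ℝ} {μ θ : ι → ℝ}
    (hmax : ∀ θ', logLik φ μ θ' ≤ logLik φ μ θ) : meanParam φ θ = μ := by
  set v := μ - meanParam φ θ
  have hderiv : HasDerivAt (fun t : ℝ => logLik φ μ (θ + t • v))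
      (v ⬝ᵥ μ - v ⬝ᵥ meanParam φ θ) 0 := by
    simp only [logLik, add_dotProduct, smul_dotProduct, smul_eq_mul]
    exact (((hasDerivAt_id (0 : ℝ)).mul_const (v ⬝ᵥ μ)).const_add (θ ⬝ᵥ μ)).sub
      (hasDerivAt_logPartition_line φ θ v) |>.congr_deriv (by simp)
  have hlocal : IsLocalMax (fun t : ℝ => logLik φ μ (θ + t • v)) 0 :=
    Filter.Eventually.of_forall fun t => by simpa using hmax (θ + t • v)
  have hvv : v ⬝ᵥ v = 0 := by
    rw [dotProduct_sub v μ, ← hlocal.hasDerivAt_eq_zero hderiv]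
  exact (sub_eq_zero.1 (dotProduct_self_eq_zero.1 hvv)).symm

theorem isMax_logLik_iff (φ : α → ι → ℝ) (μ θ : ι → ℝ) :
    (∀ θ', logLik φ μ θ' ≤ logLik φ μ θ) ↔ meanParam φ θ = μ := by
  refine ⟨meanParam_eq_of_isMax, fun hmatch θ' => ?_⟩
  have hsupport := dotProduct_meanParam_le φ θ θ'
  rw [hmatch, sub_dotProduct] at hsupport
  simp only [logLik]
  linarith

end ExpFamily

open ExpFamily in
/-- If `μ̂` is the feature-expectation (clique marginal) vector of a strictly
positive distribution `q` on the finite space `𝒳^T`, then the supremum over `θ`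
of the normalized log-likelihood `θᵀμ̂ − A(θ)` is finite, and it is attained at
`θ*` if and only if the model marginals `E_{θ*}[φ(x)]` equal `μ̂`. -/
theorem mle_attained_iff_moment_match
    {T : ℕ} {𝒳 : Type*} [Fintype 𝒳] [Nonempty 𝒳]
    {ι : Type*} [Fintype ι]
    (φ : (Fin T → 𝒳) → (ι → ℝ))
    (q : (Fin T → 𝒳) → ℝ) (hq : ∀ x, 0 < q x)
    (hqsum : ∑ x : Fin T → 𝒳, q x = 1)
    (muHat : ι → ℝ) (hmu : muHat = ∑ x : Fin T → 𝒳, q x • φ x) :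
    BddAbove (Set.range (fun θ : ι → ℝ =>
      θ ⬝ᵥ muHat - Real.log (∑ x : Fin T → 𝒳, exp (θ ⬝ᵥ φ x)))) ∧
    ∀ θs : ι → ℝ,
      (∀ θ : ι → ℝ,
        θ ⬝ᵥ muHat - Real.log (∑ x : Fin T → 𝒳, exp (θ ⬝ᵥ φ x))
          ≤ θs ⬝ᵥ muHat - Real.log (∑ x : Fin T → 𝒳, exp (θs ⬝ᵥ φ x))) ↔
      (∑ x : Fin T → 𝒳,
        exp (θs ⬝ᵥ φ x
          - Real.log (∑ x' : Fin T → 𝒳, exp (θs ⬝ᵥ φ x'))) • φ x) = muHat := by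
  subst hmu
  exact ⟨⟨0, Set.forall_mem_range.2
      (logLik_le_zero φ q (fun x => (hq x).le) hqsum)⟩,
    isMax_logLik_iff φ _⟩
end

section
/- If the true distribution p(·; θ) is a strictly positive member of the exponential family with clique-indicator features, and μ̄_N are estimated marginals converging in probability to the true marginals μ (which lie in the interior of the marginal polytope), then any sequence of distributions p(·; θ̂_N) in the family with marginals matching μ̄_N converges in probability to p(·; θ) pointwise. -/
open MeasureTheory Real Matrix Filter

variable {T : ℕ} {𝒳 : Type*} [Fintype 𝒳] [DecidableEq 𝒳]

/-- Index set for clique-indicator features. -/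
def CliqueConfig (𝒞 : Finset (Finset (Fin T))) (𝒳 : Type*) :=
  Σ C : ↥𝒞, (↥(C.1) → 𝒳)

instance (𝒞 : Finset (Finset (Fin T))) : Fintype (CliqueConfig 𝒞 𝒳) := by
  unfold CliqueConfig; infer_instance

/-- The clique-indicator feature map `φ(x)_{C, i_C} = 𝟙{x_C = i_C}`. -/
def cliqueFeatures (𝒞 : Finset (Finset (Fin T))) (x : Fin T → 𝒳) :
    CliqueConfig 𝒞 𝒳 → ℝ
  | ⟨C, i⟩ => if ∀ t : ↥(C : Finset (Fin T)), x ↑t = i t then 1 else 0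

/-- The exponential family density `p(x; θ) = exp(θᵀφ(x) − A(θ))`. -/
noncomputable def expFamDensity (𝒞 : Finset (Finset (Fin T)))
    (θ : CliqueConfig 𝒞 𝒳 → ℝ) (x : Fin T → 𝒳) : ℝ :=
  exp (θ ⬝ᵥ cliqueFeatures 𝒞 x
    - Real.log (∑ x' : Fin T → 𝒳, exp (θ ⬝ᵥ cliqueFeatures 𝒞 x')))

/-- The model marginals (feature expectations) of `p(·; θ)`. -/
noncomputable def modelMarginals (𝒞 : Finset (Finset (Fin T)))
    (θ : CliqueConfig 𝒞 𝒳 → ℝ) : CliqueConfig 𝒞 𝒳 → ℝ :=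
  fun j => ∑ x : Fin T → 𝒳, expFamDensity 𝒞 θ x * cliqueFeatures 𝒞 x j

/-! For a probability vector `q` with the same marginals as `p_θ`, the entropy gap
`H(p_θ) - H(q)` equals `∑ₓ p_θ x * klFun (q x / p_θ x) ≥ 0`, so `p_θ` is the unique
maximum-entropy distribution with its marginals. Suppose `μ(θₙ) → μ(θ)` and, along a
subsequence (the simplex is compact), `p_{θₙ} → q`; then `q` has marginals `μ(θ)`. Lifting the
convergence of `(∑ p_{θₙ}, μ(θₙ))` through the linear map `r ↦ (∑ r, μ(r))` gives competitors
`rₙ → p_θ` with the marginals of `θₙ`, which are eventually probability vectors because `p_θ > 0`.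
Hence `H(rₙ) ≤ H(p_{θₙ})`, and in the limit `H(p_θ) ≤ H(q)`, forcing `q = p_θ`. So `p_θ` depends
continuously on `μ(θ)`, and convergence in probability passes through this continuity. -/

open InformationTheory Topology

theorem mul_klFun_div {p : ℝ} (hp : 0 < p) (q : ℝ) :
    p * klFun (q / p) = q * log q - q * log p + p - q := by
  rcases eq_or_ne q 0 with rfl | hq
  · simp [klFun]
  · rw [klFun, log_div hq hp.ne']
    field_simp

theorem LinearMap.exists_tendsto_of_map_tendsto {𝕜 E F β : Type*} [NontriviallyNormedField 𝕜]
    [CompleteSpace 𝕜] [NormedAddCommGroup E] [NormedSpace 𝕜 E] [FiniteDimensional 𝕜 E]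
    [NormedAddCommGroup F] [NormedSpace 𝕜 F] (L : E →ₗ[𝕜] F) {l : Filter β} {u : β → E} {v : E}
    (hu : Tendsto (fun n => L (u n)) l (𝓝 (L v))) :
    ∃ w : β → E, (∀ n, L (w n) = L (u n)) ∧ Tendsto w l (𝓝 v) := by
  obtain ⟨S, hS⟩ := L.rangeRestrict.exists_rightInverse_of_surjective L.range_rangeRestrict
  have hLS : ∀ y, L (S y) = y := fun y => congrArg Subtype.val (LinearMap.congr_fun hS y)
  refine ⟨fun n => v + S (L.rangeRestrict (u n - v)), fun n => ?_, ?_⟩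
  · simp [hLS]
  · have h0 : Tendsto (fun n => L.rangeRestrict (u n - v)) l (𝓝 0) := by
      rw [tendsto_subtype_rng]
      simpa using hu.sub_const (L v)
    simpa using tendsto_const_nhds.add ((S.continuous_of_finiteDimensional.tendsto 0).comp h0)

theorem tendsto_measure_lt_dist_of_tendsto_comap {Ω β γ E F : Type*} [MeasurableSpace Ω]
    {P : Measure Ω} [PseudoMetricSpace E] [PseudoMetricSpace F] {f : β → E} {g : β → F} {b : β}
    (hg : Tendsto g (comap f (𝓝 (f b))) (𝓝 (g b))) {l : Filter γ} {Y : γ → Ω → β}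
    (hY : ∀ η : ℝ, 0 < η → Tendsto (fun N => P {ω | η < dist (f (Y N ω)) (f b)}) l (𝓝 0))
    {η : ℝ} (hη : 0 < η) :
    Tendsto (fun N => P {ω | η < dist (g (Y N ω)) (g b)}) l (𝓝 0) := by
  obtain ⟨δ, hδ, hfg⟩ :=
    ((Metric.nhds_basis_ball.comap f).tendsto_iff Metric.nhds_basis_ball).1 hg η hη
  have hsub : ∀ N,
      {ω | η < dist (g (Y N ω)) (g b)} ⊆ {ω | δ / 2 < dist (f (Y N ω)) (f b)} := by
    intro N ω hω
    by_contra hfar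
    have hnear : dist (g (Y N ω)) (g b) < η := hfg (Y N ω) (by
      simp only [Set.mem_ofPred_eq, not_lt, Set.mem_preimage, Metric.mem_ball] at hfar ⊢; linarith)
    exact (lt_asymm hω hnear).elim
  exact tendsto_of_tendsto_of_tendsto_of_le_of_le tendsto_const_nhds (hY (δ / 2) (by positivity))
    (fun N => zero_le) (fun N => measure_mono (hsub N))

noncomputable def entropy {α : Type*} [Fintype α] (q : α → ℝ) : ℝ :=
  ∑ x, negMulLog (q x)

theorem continuous_entropy {α : Type*} [Fintype α] : Continuous (entropy (α := α)) := by
  unfold entropy; fun_prop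

section Gibbs

variable {α ι : Type*} [Fintype α] [Fintype ι] (Φ : Matrix α ι ℝ)

-- `expFamDensity 𝒞` is `gibbsDensity (Matrix.of (cliqueFeatures 𝒞))`, and
-- `modelMarginals 𝒞 θ` is `gibbsDensity Φ θ ᵥ* Φ` for that `Φ`, both by definition.
noncomputable def gibbsDensity (θ : ι → ℝ) (x : α) : ℝ :=
  exp (θ ⬝ᵥ Φ x - log (∑ x', exp (θ ⬝ᵥ Φ x')))

theorem gibbsDensity_pos (θ : ι → ℝ) (x : α) : 0 < gibbsDensity Φ θ x := exp_pos _

theorem gibbsDensity_mem_stdSimplex [Nonempty α] (θ : ι → ℝ) :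
    gibbsDensity Φ θ ∈ stdSimplex ℝ α := by
  refine ⟨fun x => (gibbsDensity_pos Φ θ x).le, ?_⟩
  have hZ : 0 < ∑ x, exp (θ ⬝ᵥ Φ x) :=
    Finset.sum_pos (fun x _ => exp_pos _) Finset.univ_nonempty
  simp_rw [gibbsDensity, exp_sub, exp_log hZ, ← Finset.sum_div, div_self hZ.ne']

theorem sum_mul_log_gibbsDensity (θ : ι → ℝ) {q : α → ℝ} (hq : ∑ x, q x = 1) :
    ∑ x, q x * log (gibbsDensity Φ θ x) = θ ⬝ᵥ (q ᵥ* Φ) - log (∑ x, exp (θ ⬝ᵥ Φ x)) := by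
  simp_rw [gibbsDensity, log_exp, mul_sub, Finset.sum_sub_distrib, ← Finset.sum_mul, hq, one_mul,
    dotProduct_comm θ, ← dotProduct_mulVec]
  rfl

theorem entropy_gibbsDensity_sub_entropy [Nonempty α] (θ : ι → ℝ) {q : α → ℝ}
    (hq : ∑ x, q x = 1) (hqΦ : q ᵥ* Φ = gibbsDensity Φ θ ᵥ* Φ) :
    entropy (gibbsDensity Φ θ) - entropy q =
      ∑ x, gibbsDensity Φ θ x * klFun (q x / gibbsDensity Φ θ x) := by
  have hp := gibbsDensity_mem_stdSimplex Φ θ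
  have hcross : ∑ x, q x * log (gibbsDensity Φ θ x) =
      ∑ x, gibbsDensity Φ θ x * log (gibbsDensity Φ θ x) := by
    rw [sum_mul_log_gibbsDensity Φ θ hq, sum_mul_log_gibbsDensity Φ θ hp.2, hqΦ]
  simp only [mul_klFun_div (gibbsDensity_pos Φ θ _), Finset.sum_sub_distrib,
    Finset.sum_add_distrib, hcross, hp.2, hq, entropy, negMulLog, neg_mul, Finset.sum_neg_distrib]
  ring

theorem entropy_le_entropy_gibbsDensity [Nonempty α] (θ : ι → ℝ) {q : α → ℝ}
    (hq : q ∈ stdSimplex ℝ α) (hqΦ : q ᵥ* Φ = gibbsDensity Φ θ ᵥ* Φ) :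
    entropy q ≤ entropy (gibbsDensity Φ θ) := by
  rw [← sub_nonneg, entropy_gibbsDensity_sub_entropy Φ θ hq.2 hqΦ]
  exact Finset.sum_nonneg fun x _ => mul_nonneg (gibbsDensity_pos Φ θ x).le
    (klFun_nonneg (div_nonneg (hq.1 x) (gibbsDensity_pos Φ θ x).le))

theorem eq_gibbsDensity_of_entropy_le [Nonempty α] (θ : ι → ℝ) {q : α → ℝ}
    (hq : q ∈ stdSimplex ℝ α) (hqΦ : q ᵥ* Φ = gibbsDensity Φ θ ᵥ* Φ)
    (hH : entropy (gibbsDensity Φ θ) ≤ entropy q) : q = gibbsDensity Φ θ := by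
  have hp := gibbsDensity_pos Φ θ
  have hkl : ∀ x, 0 ≤ klFun (q x / gibbsDensity Φ θ x) := fun x =>
    klFun_nonneg (div_nonneg (hq.1 x) (hp x).le)
  have hsum : ∑ x, gibbsDensity Φ θ x * klFun (q x / gibbsDensity Φ θ x) = 0 := by
    rw [← entropy_gibbsDensity_sub_entropy Φ θ hq.2 hqΦ]
    exact le_antisymm (sub_nonpos.2 hH)
      (sub_nonneg.2 (entropy_le_entropy_gibbsDensity Φ θ hq hqΦ))
  funext x
  have hx := (Finset.sum_eq_zero_iff_of_nonneg fun x _ => mul_nonneg (hp x).le (hkl x)).1 hsum x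
    (Finset.mem_univ x)
  rw [mul_eq_zero, klFun_eq_zero_iff (div_nonneg (hq.1 x) (hp x).le), div_eq_one_iff_eq (hp x).ne']
    at hx
  exact hx.resolve_left (hp x).ne'

theorem eq_gibbsDensity_of_tendsto [Nonempty α] {θ : ι → ℝ} {θs : ℕ → ι → ℝ} {q : α → ℝ}
    (hμ : Tendsto (fun n => gibbsDensity Φ (θs n) ᵥ* Φ) atTop (𝓝 (gibbsDensity Φ θ ᵥ* Φ)))
    (hq : Tendsto (fun n => gibbsDensity Φ (θs n)) atTop (𝓝 q)) : q = gibbsDensity Φ θ := by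
  set p := gibbsDensity Φ θ
  have hp : p ∈ stdSimplex ℝ α := gibbsDensity_mem_stdSimplex Φ θ
  have hq_mem : q ∈ stdSimplex ℝ α := (isClosed_stdSimplex ℝ α).mem_of_tendsto hq
    (Eventually.of_forall fun n => gibbsDensity_mem_stdSimplex Φ (θs n))
  have hqΦ : q ᵥ* Φ = p ᵥ* Φ :=
    tendsto_nhds_unique
      (((Matrix.vecMulLinear Φ).continuous_of_finiteDimensional.tendsto q).comp hq) hμ
  let L : (α → ℝ) →ₗ[ℝ] ℝ × (ι → ℝ) := (∑ x, LinearMap.proj x).prod (Matrix.vecMulLinear Φ)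
  obtain ⟨r, hLr, hr⟩ := L.exists_tendsto_of_map_tendsto (u := fun n => gibbsDensity Φ (θs n))
    (v := p) (by
      simpa [L, hp.2, (gibbsDensity_mem_stdSimplex Φ _).2]
        using (tendsto_const_nhds (x := (1 : ℝ))).prodMk_nhds hμ)
  have hr_mem : ∀ᶠ n in atTop, r n ∈ stdSimplex ℝ α := by
    have hpos : ∀ᶠ n in atTop, ∀ x, 0 < r n x := eventually_all.2 fun x =>
      (tendsto_pi_nhds.1 hr x).eventually (eventually_gt_nhds (gibbsDensity_pos Φ θ x))
    refine hpos.mono fun n hn => ⟨fun x => (hn x).le, ?_⟩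
    simpa [L, hp.2, (gibbsDensity_mem_stdSimplex Φ _).2] using congrArg Prod.fst (hLr n)
  have hle : ∀ᶠ n in atTop, entropy (r n) ≤ entropy (gibbsDensity Φ (θs n)) :=
    hr_mem.mono fun n hn => entropy_le_entropy_gibbsDensity Φ (θs n) hn
      (by simpa [L] using congrArg Prod.snd (hLr n))
  have hH : entropy p ≤ entropy q := le_of_tendsto_of_tendsto
    ((continuous_entropy.tendsto p).comp hr) ((continuous_entropy.tendsto q).comp hq) hle
  exact eq_gibbsDensity_of_entropy_le Φ θ hq_mem hqΦ hH

theorem tendsto_gibbsDensity_comap_vecMul [Nonempty α] (θ : ι → ℝ) :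
    Tendsto (gibbsDensity Φ)
      (comap (fun θ' => gibbsDensity Φ θ' ᵥ* Φ) (𝓝 (gibbsDensity Φ θ ᵥ* Φ)))
      (𝓝 (gibbsDensity Φ θ)) := by
  refine tendsto_iff_seq_tendsto.2 fun θs hθs => ?_
  rw [tendsto_comap_iff] at hθs
  refine (isCompact_stdSimplex ℝ α).tendsto_nhds_of_unique_mapClusterPt
    (Eventually.of_forall fun n => gibbsDensity_mem_stdSimplex Φ (θs n)) fun q _ hq => ?_
  obtain ⟨ψ, hψ, hqψ⟩ := hq.tendsto_subseq
  exact eq_gibbsDensity_of_tendsto Φ (hθs.comp hψ.tendsto_atTop) hqψ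

end Gibbs

theorem learned_distribution_consistent_general
    (𝒞 : Finset (Finset (Fin T)))
    {Ω : Type*} [MeasurableSpace Ω] (P : Measure Ω)
    (θ : CliqueConfig 𝒞 𝒳 → ℝ)
    (muBar : ℕ → Ω → (CliqueConfig 𝒞 𝒳 → ℝ))
    (hconv : ∀ η : ℝ, 0 < η →
      Tendsto (fun N : ℕ =>
          P {ω | η < ‖muBar N ω - modelMarginals 𝒞 θ‖})
        atTop (nhds 0))
    (θhat : ℕ → Ω → (CliqueConfig 𝒞 𝒳 → ℝ))
    (hmatch : ∀ N ω, modelMarginals 𝒞 (θhat N ω) = muBar N ω) :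
    ∀ x : Fin T → 𝒳, ∀ η : ℝ, 0 < η →
      Tendsto (fun N : ℕ =>
          P {ω | η < |expFamDensity 𝒞 (θhat N ω) x - expFamDensity 𝒞 θ x|})
        atTop (nhds 0) := by
  intro x η hη
  have : Nonempty (Fin T → 𝒳) := ⟨x⟩
  have hcont : Tendsto (fun θ' => expFamDensity 𝒞 θ' x)
      (comap (modelMarginals 𝒞) (𝓝 (modelMarginals 𝒞 θ))) (𝓝 (expFamDensity 𝒞 θ x)) :=
    ((continuous_apply x).tendsto _).comp
      (tendsto_gibbsDensity_comap_vecMul (Matrix.of (cliqueFeatures 𝒞)) θ)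
  simp_rw [← hmatch, ← dist_eq_norm] at hconv
  simpa only [← Real.dist_eq] using tendsto_measure_lt_dist_of_tendsto_comap hcont hconv hη

/-- If the estimated marginals `μ̄_N` converge in probability to the true
marginals `μ(θ)` of a strictly positive member `p(·; θ)` of the family (which
lie in the interior of the marginal polytope), then any sequence of family
members `p(·; θ̂_N)` whose marginals match `μ̄_N` converges in probability to
`p(·; θ)` pointwise. -/
theorem learned_distribution_consistent [Nonempty 𝒳]
    (𝒞 : Finset (Finset (Fin T)))
    {Ω : Type*} [MeasurableSpace Ω] (P : Measure Ω) [IsProbabilityMeasure P]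
    (θ : CliqueConfig 𝒞 𝒳 → ℝ)
    (muBar : ℕ → Ω → (CliqueConfig 𝒞 𝒳 → ℝ))
    (hconv : ∀ η : ℝ, 0 < η →
      Tendsto (fun N : ℕ =>
          P {ω | η < ‖muBar N ω - modelMarginals 𝒞 θ‖})
        atTop (nhds 0))
    (θhat : ℕ → Ω → (CliqueConfig 𝒞 𝒳 → ℝ))
    (hmatch : ∀ N ω, modelMarginals 𝒞 (θhat N ω) = muBar N ω) :
    ∀ x : Fin T → 𝒳, ∀ η : ℝ, 0 < η →
      Tendsto (fun N : ℕ =>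
          P {ω | η < |expFamDensity 𝒞 (θhat N ω) x - expFamDensity 𝒞 θ x|})
        atTop (nhds 0) :=
  learned_distribution_consistent_general 𝒞 P θ muBar hconv θhat hmatch
end
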